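/- arXiv:2512.15750 — 4 statements merged into one kernel-verified Lean document; each statement's English description precedes it below -/
import Mathlib

section
/- Let m ≥ 2 and k ≥ 1 be integers, and let a, b, c, A be complex constants with a ≠ 0, c ≠ 0, and c^m·(A^m·(a/m)^(k·m) + 1) = 1. Then the entire function f(z) = c·exp((a·z + b)/m) satisfies f(z)^m + (A·f^(k)(z))^m = exp(a·z + b) for all z ∈ ℂ. -/
lemma iteratedDeriv_c_exp (c d e : ℂ) (k : ℕ) (z : ℂ) :
    iteratedDeriv k (fun w => c * Complex.exp (d * w + e)) z
      = c * d ^ k * Complex.exp (d * z + e) := by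
  induction k generalizing z with
  | zero => simp
  | succ n ih =>
    rw [iteratedDeriv_succ]
    have : deriv (iteratedDeriv n (fun w => c * Complex.exp (d * w + e))) z
        = deriv (fun w => c * d ^ n * Complex.exp (d * w + e)) z := by
      apply Filter.EventuallyEq.deriv_eq
      filter_upwards with w using ih w
    rw [this]
    have hd : HasDerivAt (fun w => c * d ^ n * Complex.exp (d * w + e))
        (c * d ^ n * (Complex.exp (d * z + e) * d)) z := by
      simpa using ((((hasDerivAt_id z).const_mul d).add_const e).cexp).const_mul (c * d ^ n)
    rw [hd.deriv]; ring

/-- For integers `m ≥ 2`, `k ≥ 1` and constants `a ≠ 0`, `c ≠ 0`, `b`, `A` with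
`c^m * (A^m * (a/m)^(k*m) + 1) = 1`, the entire function
`f z = c * exp ((a*z+b)/m)` satisfies `f^m + (A * f^(k))^m = exp (a*z+b)`. -/
theorem exp_solution_general_m (m k : ℕ) (hm : 2 ≤ m) (hk : 1 ≤ k)
    (a b c A : ℂ) (ha : a ≠ 0) (hc : c ≠ 0)
    (hcoef : c ^ m * (A ^ m * (a / (m : ℂ)) ^ (k * m) + 1) = 1) :
    ∀ z : ℂ,
      (c * Complex.exp ((a * z + b) / (m : ℂ))) ^ m
        + (A * iteratedDeriv k (fun w => c * Complex.exp ((a * w + b) / (m : ℂ))) z) ^ m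
        = Complex.exp (a * z + b) := by
  intro z
  have hm0 : (m : ℂ) ≠ 0 := by
    exact_mod_cast Nat.cast_ne_zero.mpr (by omega)
  have hfun : (fun w => c * Complex.exp ((a * w + b) / (m : ℂ)))
      = fun w => c * Complex.exp ((a / (m : ℂ)) * w + b / (m : ℂ)) := by
    funext w; congr 1; field_simp
  rw [hfun, iteratedDeriv_c_exp]
  have hexp : Complex.exp ((a / (m : ℂ)) * z + b / (m : ℂ)) ^ m
      = Complex.exp (a * z + b) := by
    rw [← Complex.exp_nat_mul]
    congr 1; field_simp
  have h1 : (a * z + b) / (m : ℂ) = (a / (m : ℂ)) * z + b / (m : ℂ) := by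
    field_simp
  rw [h1]
  calc (c * Complex.exp ((a / (m : ℂ)) * z + b / (m : ℂ))) ^ m
        + (A * (c * (a / (m : ℂ)) ^ k * Complex.exp ((a / (m : ℂ)) * z + b / (m : ℂ)))) ^ m
      = c ^ m * (A ^ m * (a / (m : ℂ)) ^ (k * m) + 1)
          * Complex.exp ((a / (m : ℂ)) * z + b / (m : ℂ)) ^ m := by
        rw [mul_pow, mul_pow, mul_pow, mul_pow, ← pow_mul]; ring
    _ = Complex.exp (a * z + b) := by rw [hcoef, hexp, one_mul]
end

section
/- Let k ≥ 1 be an integer and a, b, d, A complex constants with a ≠ 0, d ≠ 0, and d²·(A·(a/2)^k − i) = A·(a/2)^k + i. Then the entire function f(z) = ((d² − 1)/(2·i·d))·exp((a·z + b)/2) satisfies f(z)² + (A·f^(k)(z))² = exp(a·z + b) for all z ∈ ℂ. -/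
open Complex

lemma iterDeriv_aux (a b : ℂ) :
    ∀ (k : ℕ) (c z : ℂ), iteratedDeriv k (fun w => c * Complex.exp ((a * w + b) / 2)) z
      = c * (a / 2) ^ k * Complex.exp ((a * z + b) / 2) := by
  intro k
  induction k with
  | zero => intro c z; simp
  | succ n ih =>
    intro c z
    rw [iteratedDeriv_succ']
    have hder : deriv (fun w => c * Complex.exp ((a * w + b) / 2))
        = fun w => (c * (a / 2)) * Complex.exp ((a * w + b) / 2) := by
      funext w
      have h1 : HasDerivAt (fun w : ℂ => (a * w + b) / 2) (a / 2) w := by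
        simpa using (((hasDerivAt_id w).const_mul a).add_const b).div_const 2
      have h2 := (h1.cexp.const_mul c).deriv
      rw [h2]; ring
    rw [hder, ih (c * (a / 2)) z]
    ring

/-- For `k ≥ 1` and constants `a ≠ 0`, `d ≠ 0`, `b`, `A` with
`d² * (A*(a/2)^k - i) = A*(a/2)^k + i`, the entire function
`f z = ((d²-1)/(2 i d)) * exp ((a z + b)/2)` satisfies
`f² + (A f^(k))² = exp (a z + b)`. -/
theorem exp_solution_m_two (k : ℕ) (hk : 1 ≤ k) (a b d A : ℂ) (ha : a ≠ 0) (hd : d ≠ 0)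
    (hcoef : d ^ 2 * (A * (a / 2) ^ k - I) = A * (a / 2) ^ k + I) :
    ∀ z : ℂ,
      ((d ^ 2 - 1) / (2 * I * d) * Complex.exp ((a * z + b) / 2)) ^ 2
        + (A * iteratedDeriv k
            (fun w => (d ^ 2 - 1) / (2 * I * d) * Complex.exp ((a * w + b) / 2)) z) ^ 2
        = Complex.exp (a * z + b) := by
  intro z
  rw [iterDeriv_aux]
  have hE : Complex.exp ((a * z + b) / 2) ^ 2 = Complex.exp (a * z + b) := by
    rw [← Complex.exp_nat_mul]; ring_nf
  have hden : (2 * I * d) ≠ 0 := by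
    simp [hd, Complex.I_ne_zero]
  have key : ((d ^ 2 - 1) / (2 * I * d)) ^ 2
      + (A * ((d ^ 2 - 1) / (2 * I * d) * (a / 2) ^ k)) ^ 2 = 1 := by
    rw [show A * ((d ^ 2 - 1) / (2 * I * d) * (a / 2) ^ k)
        = (A * (a / 2) ^ k) * ((d ^ 2 - 1) / (2 * I * d)) from by ring]
    generalize A * (a / 2) ^ k = s at hcoef ⊢
    field_simp
    linear_combination (s * (d ^ 2 - 1) + I * (d ^ 2 + 1)) * hcoef + (d ^ 2 - 1) ^ 2 * Complex.I_sq
  calc ((d ^ 2 - 1) / (2 * I * d) * Complex.exp ((a * z + b) / 2)) ^ 2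
        + (A * ((d ^ 2 - 1) / (2 * I * d) * (a / 2) ^ k * Complex.exp ((a * z + b) / 2))) ^ 2
      = (((d ^ 2 - 1) / (2 * I * d)) ^ 2
          + (A * ((d ^ 2 - 1) / (2 * I * d) * (a / 2) ^ k)) ^ 2)
          * Complex.exp ((a * z + b) / 2) ^ 2 := by ring
    _ = Complex.exp (a * z + b) := by rw [key, hE, one_mul]
end

section
/- Let k ≥ 1 be an integer and a1, a2, b1, b2, A be complex constants with b1 ≠ 0, A·(a1/2 + i·b1)^k = i, and A·(a1/2 − i·b1)^k = −i. Then the entire function f(z) = exp((a1·z + a2)/2)·sin(b1·z + b2) satisfies f(z)² + (A·f^(k)(z))² = exp(a1·z + a2) for all z ∈ ℂ. -/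
open Complex

lemma iter_comb (r1 r2 c1 c2 : ℂ) : ∀ k : ℕ,
    iteratedDeriv k (fun w => (Complex.exp (r1*w+c1) - Complex.exp (r2*w+c2))/(2*I))
      = fun z => (r1^k * Complex.exp (r1*z+c1) - r2^k * Complex.exp (r2*z+c2))/(2*I) := by
  intro k
  induction k with
  | zero => simp [iteratedDeriv_zero]
  | succ n ih =>
    rw [iteratedDeriv_succ, ih]
    funext z
    have h1 : HasDerivAt (fun z : ℂ => (r1^n * Complex.exp (r1*z+c1) - r2^n * Complex.exp (r2*z+c2))/(2*I))
        ((r1^n * (r1 * Complex.exp (r1*z+c1)) - r2^n * (r2 * Complex.exp (r2*z+c2)))/(2*I)) z := by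
      have e1 : HasDerivAt (fun z : ℂ => Complex.exp (r1*z+c1)) (Complex.exp (r1*z+c1) * r1) z :=
        by simpa using (((hasDerivAt_id z).const_mul r1).add_const c1).cexp
      have e2 : HasDerivAt (fun z : ℂ => Complex.exp (r2*z+c2)) (Complex.exp (r2*z+c2) * r2) z :=
        by simpa using (((hasDerivAt_id z).const_mul r2).add_const c2).cexp
      have := ((e1.const_mul (r1^n)).sub (e2.const_mul (r2^n))).div_const (2*I)
      exact this.congr_deriv (by ring)
    rw [h1.deriv]
    ring

/-- For `k ≥ 1` and constants `a1, a2, b2`, `b1 ≠ 0`, `A` with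
`A*(a1/2 + i b1)^k = i` and `A*(a1/2 - i b1)^k = -i`, the entire function
`f z = exp ((a1 z + a2)/2) * sin (b1 z + b2)` satisfies
`f² + (A f^(k))² = exp (a1 z + a2)`. -/
theorem exp_sin_solution (k : ℕ) (hk : 1 ≤ k) (a1 a2 b1 b2 A : ℂ) (hb1 : b1 ≠ 0)
    (h1 : A * (a1 / 2 + I * b1) ^ k = I)
    (h2 : A * (a1 / 2 - I * b1) ^ k = -I) :
    ∀ z : ℂ,
      (Complex.exp ((a1 * z + a2) / 2) * Complex.sin (b1 * z + b2)) ^ 2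
        + (A * iteratedDeriv k
            (fun w => Complex.exp ((a1 * w + a2) / 2) * Complex.sin (b1 * w + b2)) z) ^ 2
        = Complex.exp (a1 * z + a2) := by
  intro z
  have hI : (2 * I : ℂ) ≠ 0 := by simp [I_ne_zero]
  have hf : (fun w => Complex.exp ((a1 * w + a2) / 2) * Complex.sin (b1 * w + b2))
      = fun w => (Complex.exp ((a1/2 + I*b1)*w+(a2/2 + I*b2))
          - Complex.exp ((a1/2 - I*b1)*w+(a2/2 - I*b2)))/(2*I) := by
    funext w
    have e1 : (a1/2 + I*b1)*w+(a2/2 + I*b2) = (a1*w+a2)/2 + (b1*w+b2)*I := by ring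
    have e2 : (a1/2 - I*b1)*w+(a2/2 - I*b2) = (a1*w+a2)/2 + -(b1*w+b2)*I := by ring
    rw [e1, e2, Complex.exp_add, Complex.exp_add, Complex.sin]
    generalize Complex.exp ((a1*w+a2)/2) = E
    generalize Complex.exp ((b1*w+b2)*I) = P
    generalize Complex.exp (-(b1*w+b2)*I) = Q
    rw [eq_div_iff hI]
    linear_combination E*(Q-P)*Complex.I_sq
  rw [hf, iter_comb]
  have he1 : Complex.exp ((a1/2 + I*b1)*z+(a2/2 + I*b2))
      = Complex.exp ((a1*z+a2)/2) * Complex.exp ((b1*z+b2)*I) := by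
    rw [← Complex.exp_add]; congr 1; ring
  have he2 : Complex.exp ((a1/2 - I*b1)*z+(a2/2 - I*b2))
      = Complex.exp ((a1*z+a2)/2) * Complex.exp (-(b1*z+b2)*I) := by
    rw [← Complex.exp_add]; congr 1; ring
  have hA : A * (((a1/2 + I*b1)^k * Complex.exp ((a1/2 + I*b1)*z+(a2/2 + I*b2))
        - (a1/2 - I*b1)^k * Complex.exp ((a1/2 - I*b1)*z+(a2/2 - I*b2)))/(2*I))
      = Complex.exp ((a1*z+a2)/2) * Complex.cos (b1*z+b2) := by
    rw [Complex.cos, he1, he2]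
    obtain ⟨B1, hB1⟩ : ∃ B, (a1/2 + I*b1)^k = B := ⟨_, rfl⟩
    obtain ⟨B2, hB2⟩ : ∃ B, (a1/2 - I*b1)^k = B := ⟨_, rfl⟩
    rw [hB1] at h1 ⊢
    rw [hB2] at h2 ⊢
    generalize Complex.exp ((a1*z+a2)/2) = E
    generalize Complex.exp ((b1*z+b2)*I) = P
    generalize Complex.exp (-(b1*z+b2)*I) = Q
    field_simp
    linear_combination E*P*h1 - E*Q*h2
  rw [hA]
  have hE : Complex.exp (a1*z+a2) = Complex.exp ((a1*z+a2)/2) ^ 2 := by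
    rw [sq, ← Complex.exp_add]; congr 1; ring
  rw [hE]
  linear_combination Complex.exp ((a1*z+a2)/2)^2 * Complex.sin_sq_add_cos_sq (b1*z+b2)
end

section
/- For the choices R1(z) = (z−1)/(z+1), R(z) = (z²+1)/(z+1), α(z) = z, m = 2, k = 1, and Q(z) = ((z−1)/(z+1))² + ((z²+1)(z²+3)/(2(z+1)³))², the function f(z) = R1(z)·exp(z/2) satisfies f(z)² + (R(z)·f'(z))² = Q(z)·exp(z) for all z ∈ ℂ with z ≠ −1. -/
/-- With `R1 z = (z-1)/(z+1)`, `R z = (z²+1)/(z+1)`, `α z = z`, `m = 2`, `k = 1`,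
`Q z = ((z-1)/(z+1))² + ((z²+1)(z²+3)/(2(z+1)³))²`, the function
`f z = R1 z * exp (z/2)` satisfies `f² + (R f')² = Q exp α` away from `z = -1`. -/
theorem example_m_two :
    ∀ z : ℂ, z ≠ -1 →
      ((z - 1) / (z + 1) * Complex.exp (z / 2)) ^ 2
        + ((z ^ 2 + 1) / (z + 1)
            * deriv (fun w => (w - 1) / (w + 1) * Complex.exp (w / 2)) z) ^ 2
        = (((z - 1) / (z + 1)) ^ 2
            + ((z ^ 2 + 1) * (z ^ 2 + 3) / (2 * (z + 1) ^ 3)) ^ 2) * Complex.exp z := by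
  intro z hz
  have hz1 : z + 1 ≠ 0 := by
    intro h; apply hz; linear_combination h
  have h1 : HasDerivAt (fun w : ℂ => (w - 1) / (w + 1))
      ((1 * (z + 1) - (z - 1) * 1) / (z + 1) ^ 2) z := by
    exact ((hasDerivAt_id z).sub_const 1).div ((hasDerivAt_id z).add_const 1) hz1
  have h2 : HasDerivAt (fun w : ℂ => Complex.exp (w / 2))
      (Complex.exp (z / 2) * (1 / 2)) z := by
    simpa [Function.comp_def] using (Complex.hasDerivAt_exp (z / 2)).comp z
      ((hasDerivAt_id z).div_const 2)
  have h3 := h1.mul h2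
  have hderiv : deriv (fun w => (w - 1) / (w + 1) * Complex.exp (w / 2)) z
      = (z ^ 2 + 3) / (2 * (z + 1) ^ 2) * Complex.exp (z / 2) := by
    change deriv ((fun w => (w - 1) / (w + 1)) * fun w => Complex.exp (w / 2)) z = _
    rw [h3.deriv]
    field_simp
    ring
  rw [hderiv]
  have hexp : Complex.exp z = Complex.exp (z / 2) * Complex.exp (z / 2) := by
    rw [← Complex.exp_add]; ring_nf
  rw [hexp]
  generalize Complex.exp (z / 2) = E
  have h8 : (4:ℂ) + z*32 + z^2*112 + z^3*224 + z^4*280 + z^5*224 + z^6*112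
      + z^7*32 + z^8*4 ≠ 0 := by
    intro h
    exact pow_ne_zero 8 hz1 (by linear_combination h / 4)
  field_simp
end
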